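/- Let (u_j)_{j=1}^l be a classical solution of the regularized thin-film system on the graph on [0,T], and let A > 0 and G_ε(z) := ∫_A^z ∫_A^v dy dv / (|y|^n + ε). Then the entropy identity holds: for every t ∈ [0,T], ∑_{j=1}^l ∫₀¹ G_ε(u_j(s,t)) ds + ∑_{j=1}^l ∫₀ᵗ ∫₀¹ w_j(s,σ)² ds dσ = ∑_{j=1}^l ∫₀¹ G_ε(u_j(s,0)) ds. In particular the entropy ∑_j ∫₀¹ G_ε(u_j(s,t)) ds is nonincreasing in t. -/

import Mathlib

open Set MeasureTheory intervalIntegral Real Filter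

/-- The regularized mobility `f_ε(z) = |z|^n + ε`. -/
noncomputable def tfeF (n ε z : ℝ) : ℝ := |z| ^ n + ε

/-- `w = -∂_s² u` for a function `u = u(s,t)` of two variables. -/
noncomputable def tfeW (u : ℝ → ℝ → ℝ) (s t : ℝ) : ℝ :=
  -(iteratedDeriv 2 (fun x => u x t) s)

/-- A classical solution of the regularized thin-film system on a metric graph with
edges `j : Fin l` (parameterized over `[0,1]`, with tail vertex `tl j` at `s = 0` and
head vertex `hd j` at `s = 1`), boundary vertex set `bdry`, on the time interval `[0,T]`. -/
structure IsGraphTFESolution {l m : ℕ} (n ε T : ℝ) (tl hd : Fin l → Fin m)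
    (bdry : Set (Fin m)) (u : Fin l → ℝ → ℝ → ℝ) : Prop where
  /-- regularity (in particular `C^{4,1}`) -/
  smooth : ∀ j, ContDiff ℝ 4 (fun p : ℝ × ℝ => u j p.1 p.2)
  /-- the PDE `∂_t u_j = ∂_s (f_ε(u_j) ∂_s w_j)` -/
  pde : ∀ j, ∀ s ∈ Icc (0:ℝ) 1, ∀ t ∈ Icc (0:ℝ) T,
    deriv (fun τ => u j s τ) t
      = deriv (fun x => tfeF n ε (u j x t) * deriv (fun y => tfeW (u j) y t) x) s
  /-- continuity of `u` at interior vertices -/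
  cont_u_hh : ∀ a ∉ bdry, ∀ t ∈ Icc (0:ℝ) T, ∀ j j', hd j = a → hd j' = a →
    u j 1 t = u j' 1 t
  cont_u_tt : ∀ a ∉ bdry, ∀ t ∈ Icc (0:ℝ) T, ∀ i i', tl i = a → tl i' = a →
    u i 0 t = u i' 0 t
  cont_u_ht : ∀ a ∉ bdry, ∀ t ∈ Icc (0:ℝ) T, ∀ j i, hd j = a → tl i = a →
    u j 1 t = u i 0 t
  /-- continuity of `w` at interior vertices -/
  cont_w_hh : ∀ a ∉ bdry, ∀ t ∈ Icc (0:ℝ) T, ∀ j j', hd j = a → hd j' = a →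
    tfeW (u j) 1 t = tfeW (u j') 1 t
  cont_w_tt : ∀ a ∉ bdry, ∀ t ∈ Icc (0:ℝ) T, ∀ i i', tl i = a → tl i' = a →
    tfeW (u i) 0 t = tfeW (u i') 0 t
  cont_w_ht : ∀ a ∉ bdry, ∀ t ∈ Icc (0:ℝ) T, ∀ j i, hd j = a → tl i = a →
    tfeW (u j) 1 t = tfeW (u i) 0 t
  /-- Kirchhoff balance of `∂_s u` at interior vertices -/
  kirchhoff_u : ∀ a ∉ bdry, ∀ t ∈ Icc (0:ℝ) T,
    ∑ j ∈ Finset.univ.filter (fun j => hd j = a), deriv (fun x => u j x t) 1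
      = ∑ i ∈ Finset.univ.filter (fun i => tl i = a), deriv (fun x => u i x t) 0
  /-- Kirchhoff balance of `∂_s w` at interior vertices -/
  kirchhoff_w : ∀ a ∉ bdry, ∀ t ∈ Icc (0:ℝ) T,
    ∑ j ∈ Finset.univ.filter (fun j => hd j = a), deriv (fun x => tfeW (u j) x t) 1
      = ∑ i ∈ Finset.univ.filter (fun i => tl i = a), deriv (fun x => tfeW (u i) x t) 0
  /-- no-flux conditions at boundary vertices (head side) -/
  bdry_head : ∀ a ∈ bdry, ∀ t ∈ Icc (0:ℝ) T, ∀ j, hd j = a →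
    deriv (fun x => u j x t) 1 = 0 ∧ deriv (fun x => tfeW (u j) x t) 1 = 0
  /-- no-flux conditions at boundary vertices (tail side) -/
  bdry_tail : ∀ a ∈ bdry, ∀ t ∈ Icc (0:ℝ) T, ∀ i, tl i = a →
    deriv (fun x => u i x t) 0 = 0 ∧ deriv (fun x => tfeW (u i) x t) 0 = 0

/-- The entropy function `G_ε(z) = ∫_A^z ∫_A^v dy dv / (|y|^n + ε)`. -/
noncomputable def tfeG (n ε A z : ℝ) : ℝ := ∫ v in A..z, ∫ y in A..v, (|y| ^ n + ε)⁻¹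

/-!
Along each edge, `G_ε'(u) ∂_t u = G_ε'(u) ∂_s (f_ε(u) ∂_s w)` integrates by parts twice, using
`G_ε'' f_ε = 1` and `∂_s² u = -w`, to `-∫ w²` plus the endpoint terms
`G_ε'(u) f_ε(u) ∂_s w - ∂_s u · w`. Continuity of `u` and `w` together with the Kirchhoff laws
make these terms cancel at interior vertices, and the no-flux conditions make them vanish at
boundary vertices. So the entropy has time derivative `-∑ ∫ w² ≤ 0`; the identity is the
fundamental theorem of calculus in time, and the monotonicity is the sign of the derivative.
-/

open Topology

lemma hasDerivAt_of_eventually_hasDerivAt_of_ne {E : Type*} [NormedAddCommGroup E]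
    [NormedSpace ℝ E] {f g : ℝ → E} {x : ℝ}
    (f_diff : ∀ᶠ y in 𝓝[≠] x, HasDerivAt f (g y) y) (hf : ContinuousAt f x)
    (hg : ContinuousAt g x) : HasDerivAt f (g x) x := by
  have right : HasDerivWithinAt f (g x) (Ici x) x := by
    have hs : {y | HasDerivAt f (g y) y} ∈ 𝓝[>] x :=
      nhdsWithin_mono x (fun y hy => ne_of_gt hy) f_diff
    refine hasDerivWithinAt_Ici_of_tendsto_deriv
      (fun y hy => hy.differentiableAt.differentiableWithinAt) hf.continuousWithinAt hs ?_
    exact (tendsto_inf_left hg).congr' (mem_of_superset hs fun y hy => hy.deriv.symm)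
  have left : HasDerivWithinAt f (g x) (Iic x) x := by
    have hs : {y | HasDerivAt f (g y) y} ∈ 𝓝[<] x :=
      nhdsWithin_mono x (fun y hy => ne_of_lt hy) f_diff
    refine hasDerivWithinAt_Iic_of_tendsto_deriv
      (fun y hy => hy.differentiableAt.differentiableWithinAt) hf.continuousWithinAt hs ?_
    exact (tendsto_inf_left hg).congr' (mem_of_superset hs fun y hy => hy.deriv.symm)
  simpa using left.union right

section Mobility

variable {n ε : ℝ}

lemma tfeF_pos (hε : 0 < ε) (z : ℝ) : 0 < tfeF n ε z := by
  unfold tfeF; positivity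

lemma continuous_tfeF (hn : 0 ≤ n) : Continuous (tfeF n ε) :=
  ((continuous_rpow_const hn).comp continuous_abs).add continuous_const

noncomputable def tfeG' (n ε A v : ℝ) : ℝ := ∫ y in A..v, (|y| ^ n + ε)⁻¹

lemma hasDerivAt_tfeG' (hn : 0 ≤ n) (hε : 0 < ε) (A v : ℝ) :
    HasDerivAt (tfeG' n ε A) (tfeF n ε v)⁻¹ v :=
  ((continuous_tfeF hn).inv₀ fun z => (tfeF_pos hε z).ne').integral_hasStrictDerivAt A v
    |>.hasDerivAt

lemma continuous_tfeG' (hn : 0 ≤ n) (hε : 0 < ε) (A : ℝ) : Continuous (tfeG' n ε A) :=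
  continuous_iff_continuousAt.2 fun v => (hasDerivAt_tfeG' hn hε A v).continuousAt

lemma hasDerivAt_tfeG (hn : 0 ≤ n) (hε : 0 < ε) (A z : ℝ) :
    HasDerivAt (tfeG n ε A) (tfeG' n ε A z) z :=
  ((continuous_tfeG' hn hε A).integral_hasStrictDerivAt A z).hasDerivAt

lemma continuous_tfeG (hn : 0 ≤ n) (hε : 0 < ε) (A : ℝ) : Continuous (tfeG n ε A) :=
  continuous_iff_continuousAt.2 fun z => (hasDerivAt_tfeG hn hε A z).continuousAt

lemma differentiableAt_abs_rpow_comp (hn : 1 ≤ n) {h : ℝ → ℝ} {x : ℝ}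
    (hd : DifferentiableAt ℝ h x) (hx : h x = 0 → deriv h x = 0) :
    DifferentiableAt ℝ (fun y => |h y| ^ n) x := by
  by_cases hx0 : h x = 0
  · have hn0 : n ≠ 0 := by linarith
    have h_littleO : h =o[𝓝 x] fun y => y - x := by
      have hd' := hd.hasDerivAt
      rw [hx hx0, hasDerivAt_iff_isLittleO] at hd'
      simpa [hx0] using hd'
    have h_bigO : (fun y => |h y| ^ n) =O[𝓝 x] h := by
      refine Asymptotics.IsBigO.of_bound 1 ?_
      have hsmall : ∀ᶠ y in 𝓝 x, |h y| ≤ 1 := by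
        have := hd.continuousAt.abs.tendsto
        rw [hx0, abs_zero] at this
        exact this.eventually (eventually_le_nhds one_pos)
      filter_upwards [hsmall] with y hy
      rw [one_mul, Real.norm_of_nonneg (by positivity), Real.norm_eq_abs]
      exact rpow_le_self_of_le_one (abs_nonneg _) hy hn
    refine (hasDerivAt_iff_isLittleO.2 ?_).differentiableAt (f' := 0)
    simpa [hx0, zero_rpow hn0] using h_bigO.trans_isLittleO h_littleO
  · exact (hd.abs hx0).rpow_const (Or.inr hn)

/-- For `n = 1`, `f_ε(h) q` need not be differentiable at a zero of `h`, where `deriv` then takes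
its junk value `0`; but where `h' ≠ 0` such a zero is isolated, and the continuous `g` extends the
derivative across it. -/
lemma hasDerivAt_tfeF_comp_mul_of_deriv_eq (hn : 1 ≤ n) {h q g : ℝ → ℝ} {U : Set ℝ}
    (hU : IsOpen U) (hh : Differentiable ℝ h) (hq : Differentiable ℝ q) (hg : ContinuousOn g U)
    (hderiv : ∀ x ∈ U, deriv (fun y => tfeF n ε (h y) * q y) x = g x) {x : ℝ} (hx : x ∈ U) :
    HasDerivAt (fun y => tfeF n ε (h y) * q y) (g x) x := by
  have regular : ∀ y ∈ U, (h y = 0 → deriv h y = 0) →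
      HasDerivAt (fun y => tfeF n ε (h y) * q y) (g y) y := fun y hy hy0 => by
    rw [← hderiv y hy]
    exact (((differentiableAt_abs_rpow_comp hn (hh y) hy0).add_const ε).mul (hq y)).hasDerivAt
  by_cases hx0 : h x = 0 → deriv h x = 0
  · exact regular x hx hx0
  push Not at hx0
  refine hasDerivAt_of_eventually_hasDerivAt_of_ne ?_
    (((continuous_tfeF (by linarith)).comp hh.continuous).mul hq.continuous).continuousAt
    (hg.continuousAt (hU.mem_nhds hx))
  filter_upwards [(hh x).hasDerivAt.eventually_ne (c := 0) hx0.2,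
    eventually_nhdsWithin_of_eventually_nhds (hU.eventually_mem hx)] with y hy hyU
  exact regular y hyU fun h0 => absurd h0 hy

end Mobility

section PartialDeriv

variable {u : ℝ → ℝ → ℝ} {k m : WithTop ℕ∞}

lemma contDiff_deriv_fst (hu : ContDiff ℝ m fun p : ℝ × ℝ => u p.1 p.2) (hkm : k + 1 ≤ m) :
    ContDiff ℝ k fun p : ℝ × ℝ => deriv (fun x => u x p.2) p.1 := by
  have hd := (hu.of_le (le_add_self.trans hkm)).differentiable one_ne_zero
  have h : (fun p : ℝ × ℝ => deriv (fun x => u x p.2) p.1)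
      = fun p => fderiv ℝ (fun p : ℝ × ℝ => u p.1 p.2) p (1, 0) := by
    funext p
    exact ((hd p).hasFDerivAt.comp_hasDerivAt p.1
      ((hasDerivAt_id p.1).prodMk (hasDerivAt_const p.1 p.2))).deriv
  rw [h]
  exact (hu.fderiv_right hkm).clm_apply contDiff_const

lemma contDiff_deriv_snd (hu : ContDiff ℝ m fun p : ℝ × ℝ => u p.1 p.2) (hkm : k + 1 ≤ m) :
    ContDiff ℝ k fun p : ℝ × ℝ => deriv (fun τ => u p.1 τ) p.2 := by
  have hd := (hu.of_le (le_add_self.trans hkm)).differentiable one_ne_zero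
  have h : (fun p : ℝ × ℝ => deriv (fun τ => u p.1 τ) p.2)
      = fun p => fderiv ℝ (fun p : ℝ × ℝ => u p.1 p.2) p (0, 1) := by
    funext p
    exact ((hd p).hasFDerivAt.comp_hasDerivAt p.2
      ((hasDerivAt_const p.2 p.1).prodMk (hasDerivAt_id p.2))).deriv
  rw [h]
  exact (hu.fderiv_right hkm).clm_apply contDiff_const

lemma tfeW_eq_neg_deriv_deriv (s t : ℝ) :
    tfeW u s t = -deriv (fun x => deriv (fun y => u y t) x) s := by
  simp only [tfeW, iteratedDeriv_succ, iteratedDeriv_zero]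

lemma contDiff_tfeW (hu : ContDiff ℝ m fun p : ℝ × ℝ => u p.1 p.2) (hkm : k + 2 ≤ m) :
    ContDiff ℝ k fun p : ℝ × ℝ => tfeW u p.1 p.2 := by
  simp only [tfeW_eq_neg_deriv_deriv]
  exact (contDiff_deriv_fst (u := fun x t => deriv (fun y => u y t) x)
    (contDiff_deriv_fst (k := k + 1) hu (by rwa [add_assoc, one_add_one_eq_two])) le_rfl).neg

end PartialDeriv

section Slice

variable {F : ℝ × ℝ → ℝ}

lemma continuous_slice (hF : Continuous F) (t : ℝ) : Continuous fun x => F (x, t) :=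
  hF.comp (continuous_id.prodMk continuous_const)

lemma differentiable_slice (hF : Differentiable ℝ F) (t : ℝ) :
    Differentiable ℝ fun x => F (x, t) :=
  hF.comp (differentiable_id.prodMk (differentiable_const t))

end Slice

section Edge

variable {n ε A t a b : ℝ} {u : ℝ → ℝ → ℝ}

noncomputable def entropyFlux (n ε A : ℝ) (u : ℝ → ℝ → ℝ) (s t : ℝ) : ℝ :=
  tfeG' n ε A (u s t) * (tfeF n ε (u s t) * deriv (fun y => tfeW u y t) s)
    - deriv (fun x => u x t) s * tfeW u s t

lemma continuous_entropyFlux (hn : 0 ≤ n) (hε : 0 < ε)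
    (hu : ContDiff ℝ 3 fun p : ℝ × ℝ => u p.1 p.2) :
    Continuous fun s => entropyFlux n ε A u s t := by
  have hu_s := contDiff_deriv_fst hu (k := 2) (by norm_num)
  have hw := contDiff_tfeW hu (k := 1) (by norm_num)
  have hw_s := contDiff_deriv_fst hw (k := 0) (by norm_num)
  have hu_slice := continuous_slice hu.continuous t
  exact (((continuous_tfeG' hn hε A).comp hu_slice).mul (((continuous_tfeF hn).comp hu_slice).mul
    (continuous_slice hw_s.continuous t))).sub
    ((continuous_slice hu_s.continuous t).mul (continuous_slice hw.continuous t))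

lemma hasDerivAt_entropyFlux (hn : 1 ≤ n) (hε : 0 < ε)
    (hu : ContDiff ℝ 4 fun p : ℝ × ℝ => u p.1 p.2)
    (hpde : ∀ s ∈ Ioo a b, deriv (fun τ => u s τ) t
      = deriv (fun x => tfeF n ε (u x t) * deriv (fun y => tfeW u y t) x) s)
    {x : ℝ} (hx : x ∈ Ioo a b) :
    HasDerivAt (fun s => entropyFlux n ε A u s t)
      (tfeG' n ε A (u x t) * deriv (fun τ => u x τ) t + tfeW u x t ^ 2) x := by
  have hu_s := contDiff_deriv_fst hu (k := 3) (by norm_num)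
  have hw := contDiff_tfeW hu (k := 2) (by norm_num)
  have hw_s := contDiff_deriv_fst hw (k := 1) (by norm_num)
  have hu_t := contDiff_deriv_snd hu (k := 3) (by norm_num)
  have d_u := differentiable_slice (hu.differentiable (by norm_num)) t
  have d_u_s : HasDerivAt (fun x => deriv (fun y => u y t) x) (-tfeW u x t) x := by
    rw [tfeW_eq_neg_deriv_deriv, neg_neg]
    exact (differentiable_slice (hu_s.differentiable (by norm_num)) t x).hasDerivAt
  have d_w := (differentiable_slice (hw.differentiable (by norm_num)) t x).hasDerivAt
  have d_G' := (hasDerivAt_tfeG' (n := n) (by linarith) hε A (u x t)).comp x (d_u x).hasDerivAt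
  have d_flux := hasDerivAt_tfeF_comp_mul_of_deriv_eq hn isOpen_Ioo d_u
    (differentiable_slice (hw_s.differentiable (by norm_num)) t)
    (continuous_slice hu_t.continuous t).continuousOn (fun s hs => (hpde s hs).symm) hx
  refine ((d_G'.fun_mul d_flux).fun_sub (d_u_s.fun_mul d_w)).congr_deriv ?_
  have hF := (tfeF_pos (n := n) hε (u x t)).ne'
  simp only [Function.comp_apply]
  field_simp
  ring

lemma integral_tfeG'_mul_deriv_eq (hn : 1 ≤ n) (hε : 0 < ε) (hab : a ≤ b)
    (hu : ContDiff ℝ 4 fun p : ℝ × ℝ => u p.1 p.2)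
    (hpde : ∀ s ∈ Ioo a b, deriv (fun τ => u s τ) t
      = deriv (fun x => tfeF n ε (u x t) * deriv (fun y => tfeW u y t) x) s) :
    ∫ s in a..b, tfeG' n ε A (u s t) * deriv (fun τ => u s τ) t
      = entropyFlux n ε A u b t - entropyFlux n ε A u a t - ∫ s in a..b, tfeW u s t ^ 2 := by
  have hG'u_t : Continuous fun s => tfeG' n ε A (u s t) * deriv (fun τ => u s τ) t :=
    ((continuous_tfeG' (by linarith) hε A).comp (continuous_slice hu.continuous t)).mul
      (continuous_slice (contDiff_deriv_snd hu (k := 0) (by norm_num)).continuous t)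
  have hw2 : Continuous fun s => tfeW u s t ^ 2 :=
    (continuous_slice (contDiff_tfeW hu (k := 0) (by norm_num)).continuous t).pow 2
  have hFTC := integral_eq_sub_of_hasDeriv_right_of_le hab
    (continuous_entropyFlux (by linarith) hε (hu.of_le (by norm_num))).continuousOn
    (fun x hx => (hasDerivAt_entropyFlux (A := A) hn hε hu hpde hx).hasDerivWithinAt)
    ((hG'u_t.add hw2).intervalIntegrable a b)
  rw [integral_add (hG'u_t.intervalIntegrable a b) (hw2.intervalIntegrable a b)] at hFTC
  linarith

end Edge

lemma hasDerivAt_intervalIntegral_of_continuous {F F' : ℝ → ℝ → ℝ}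
    (hF : ∀ x, Continuous (F x)) (hF' : Continuous fun p : ℝ × ℝ => F' p.1 p.2)
    (hderiv : ∀ x t, HasDerivAt (fun x => F x t) (F' x t) x) (a b x₀ : ℝ) :
    HasDerivAt (fun x => ∫ t in a..b, F x t) (∫ t in a..b, F' x₀ t) x₀ := by
  obtain ⟨C, hC⟩ := ((isCompact_closedBall x₀ 1).prod isCompact_uIcc).exists_bound_of_continuousOn
    hF'.continuousOn
  refine (hasDerivAt_integral_of_dominated_loc_of_deriv_le (bound := fun _ => C)
    (Metric.ball_mem_nhds x₀ one_pos) (Eventually.of_forall fun x => (hF x).aestronglyMeasurable)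
    ((hF x₀).intervalIntegrable a b)
    (hF'.comp (continuous_const.prodMk continuous_id)).aestronglyMeasurable ?_
    intervalIntegrable_const (Eventually.of_forall fun t _ x _ => hderiv x t)).2
  exact Eventually.of_forall fun t ht x hx =>
    hC (x, t) ⟨Metric.ball_subset_closedBall hx, uIoc_subset_uIcc ht⟩

section Entropy

variable {n ε A : ℝ} {u : ℝ → ℝ → ℝ}

lemma hasDerivAt_integral_tfeG_comp (hn : 0 ≤ n) (hε : 0 < ε)
    (hu : ContDiff ℝ 1 fun p : ℝ × ℝ => u p.1 p.2) (a b t : ℝ) :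
    HasDerivAt (fun τ => ∫ s in a..b, tfeG n ε A (u s τ))
      (∫ s in a..b, tfeG' n ε A (u s t) * deriv (fun τ => u s τ) t) t := by
  have hu_t := (contDiff_deriv_snd hu (k := 0) (by norm_num)).continuous
  refine hasDerivAt_intervalIntegral_of_continuous (F := fun τ s => tfeG n ε A (u s τ))
    (F' := fun τ s => tfeG' n ε A (u s τ) * deriv (fun τ => u s τ) τ)
    (fun τ => (continuous_tfeG hn hε A).comp (continuous_slice hu.continuous τ))
    (((continuous_tfeG' hn hε A).comp (hu.continuous.comp continuous_swap)).mul
      (hu_t.comp continuous_swap))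
    (fun τ s => ?_) a b t
  have hd : Differentiable ℝ fun τ => u s τ :=
    (hu.differentiable one_ne_zero).comp ((differentiable_const s).prodMk differentiable_id)
  exact (hasDerivAt_tfeG hn hε A (u s τ)).comp τ (hd τ).hasDerivAt

lemma continuous_integral_tfeW_sq (hu : ContDiff ℝ 2 fun p : ℝ × ℝ => u p.1 p.2) (a b : ℝ) :
    Continuous fun σ => ∫ s in a..b, tfeW u s σ ^ 2 :=
  continuous_parametric_intervalIntegral_of_continuous' (f := fun σ s => tfeW u s σ ^ 2)
    (((contDiff_tfeW hu (k := 0) (by norm_num)).continuous.comp continuous_swap).fun_pow 2) a b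

end Entropy

section Vertex

lemma exists_eq_at_vertex {ι V : Type*} {tl hd : ι → V} {a : V} {v₀ v₁ : ι → ℝ}
    (h_hh : ∀ j j', hd j = a → hd j' = a → v₁ j = v₁ j')
    (h_tt : ∀ i i', tl i = a → tl i' = a → v₀ i = v₀ i')
    (h_ht : ∀ j i, hd j = a → tl i = a → v₁ j = v₀ i) :
    ∃ c, (∀ j, hd j = a → v₁ j = c) ∧ ∀ i, tl i = a → v₀ i = c := by
  by_cases hH : ∃ j, hd j = a
  · obtain ⟨j₀, hj₀⟩ := hH
    exact ⟨v₁ j₀, fun j hj => h_hh j j₀ hj hj₀, fun i hi => (h_ht j₀ i hj₀ hi).symm⟩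
  by_cases hT : ∃ i, tl i = a
  · obtain ⟨i₀, hi₀⟩ := hT
    exact ⟨v₀ i₀, fun j hj => absurd ⟨j, hj⟩ hH, fun i hi => h_tt i i₀ hi hi₀⟩
  · exact ⟨0, fun j hj => absurd ⟨j, hj⟩ hH, fun i hi => absurd ⟨i, hi⟩ hT⟩

variable {n ε A s t : ℝ}

lemma entropyFlux_eq_zero {u : ℝ → ℝ → ℝ} (hu_s : deriv (fun x => u x t) s = 0)
    (hw_s : deriv (fun y => tfeW u y t) s = 0) : entropyFlux n ε A u s t = 0 := by
  simp [entropyFlux, hu_s, hw_s]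

lemma sum_entropyFlux_of_eq {ι : Type*} (S : Finset ι) {u : ι → ℝ → ℝ → ℝ} {c d : ℝ}
    (hc : ∀ j ∈ S, u j s t = c) (hd : ∀ j ∈ S, tfeW (u j) s t = d) :
    ∑ j ∈ S, entropyFlux n ε A (u j) s t
      = tfeG' n ε A c * tfeF n ε c * ∑ j ∈ S, deriv (fun y => tfeW (u j) y t) s
        - d * ∑ j ∈ S, deriv (fun x => u j x t) s := by
  rw [Finset.mul_sum, Finset.mul_sum, ← Finset.sum_sub_distrib]
  refine Finset.sum_congr rfl fun j hj => ?_
  rw [entropyFlux, hc j hj, hd j hj]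
  ring

end Vertex

namespace IsGraphTFESolution

variable {l m : ℕ} {n ε T A t : ℝ} {tl hd : Fin l → Fin m} {bdry : Set (Fin m)}
  {u : Fin l → ℝ → ℝ → ℝ}

theorem sum_entropyFlux_sub_eq_zero (hu : IsGraphTFESolution n ε T tl hd bdry u)
    (ht : t ∈ Icc 0 T) :
    ∑ j, (entropyFlux n ε A (u j) 1 t - entropyFlux n ε A (u j) 0 t) = 0 := by
  rw [Finset.sum_sub_distrib, ← Finset.sum_fiberwise Finset.univ hd,
    ← Finset.sum_fiberwise Finset.univ tl, ← Finset.sum_sub_distrib]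
  refine Finset.sum_eq_zero fun a _ => ?_
  by_cases ha : a ∈ bdry
  · rw [Finset.sum_eq_zero, Finset.sum_eq_zero, sub_zero]
    · intro i hi
      obtain ⟨hu_s, hw_s⟩ := hu.bdry_tail a ha t ht i (Finset.mem_filter.1 hi).2
      exact entropyFlux_eq_zero hu_s hw_s
    · intro j hj
      obtain ⟨hu_s, hw_s⟩ := hu.bdry_head a ha t ht j (Finset.mem_filter.1 hj).2
      exact entropyFlux_eq_zero hu_s hw_s
  obtain ⟨c, hc_hd, hc_tl⟩ := exists_eq_at_vertex (v₀ := fun i => u i 0 t)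
    (v₁ := fun j => u j 1 t) (hu.cont_u_hh a ha t ht) (hu.cont_u_tt a ha t ht)
    (hu.cont_u_ht a ha t ht)
  obtain ⟨d, hd_hd, hd_tl⟩ := exists_eq_at_vertex (v₀ := fun i => tfeW (u i) 0 t)
    (v₁ := fun j => tfeW (u j) 1 t) (hu.cont_w_hh a ha t ht) (hu.cont_w_tt a ha t ht)
    (hu.cont_w_ht a ha t ht)
  rw [sum_entropyFlux_of_eq _ (fun j hj => hc_hd j (Finset.mem_filter.1 hj).2)
      (fun j hj => hd_hd j (Finset.mem_filter.1 hj).2),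
    sum_entropyFlux_of_eq _ (fun i hi => hc_tl i (Finset.mem_filter.1 hi).2)
      (fun i hi => hd_tl i (Finset.mem_filter.1 hi).2),
    hu.kirchhoff_u a ha t ht, hu.kirchhoff_w a ha t ht, sub_self]

theorem hasDerivAt_entropy (hu : IsGraphTFESolution n ε T tl hd bdry u) (hn : 1 ≤ n)
    (hε : 0 < ε) (ht : t ∈ Icc 0 T) :
    HasDerivAt (fun τ => ∑ j, ∫ s in (0:ℝ)..1, tfeG n ε A (u j s τ))
      (-∑ j, ∫ s in (0:ℝ)..1, tfeW (u j) s t ^ 2) t := by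
  refine (HasDerivAt.fun_sum fun j _ => hasDerivAt_integral_tfeG_comp (A := A) (by linarith) hε
    ((hu.smooth j).of_le (by norm_num)) 0 1 t).congr_deriv ?_
  rw [Finset.sum_congr rfl fun j _ => integral_tfeG'_mul_deriv_eq hn hε zero_le_one (hu.smooth j)
      fun s hs => hu.pde j s (Ioo_subset_Icc_self hs) t ht,
    Finset.sum_sub_distrib, hu.sum_entropyFlux_sub_eq_zero ht, zero_sub]

end IsGraphTFESolution

theorem entropy_identity_general {l m : ℕ}
    (n ε T : ℝ) (hn : 1 ≤ n) (hε : 0 < ε)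
    (tl hd : Fin l → Fin m) (bdry : Set (Fin m)) (u : Fin l → ℝ → ℝ → ℝ)
    (hu : IsGraphTFESolution n ε T tl hd bdry u)
    (A : ℝ) :
    (∀ t ∈ Icc (0:ℝ) T,
      ∑ j : Fin l, (∫ s in (0:ℝ)..1, tfeG n ε A (u j s t))
        + ∑ j : Fin l, (∫ σ in (0:ℝ)..t, ∫ s in (0:ℝ)..1, (tfeW (u j) s σ) ^ 2)
      = ∑ j : Fin l, (∫ s in (0:ℝ)..1, tfeG n ε A (u j s 0))) ∧
    (∀ t₁ ∈ Icc (0:ℝ) T, ∀ t₂ ∈ Icc (0:ℝ) T, t₁ ≤ t₂ →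
      ∑ j : Fin l, (∫ s in (0:ℝ)..1, tfeG n ε A (u j s t₂))
        ≤ ∑ j : Fin l, (∫ s in (0:ℝ)..1, tfeG n ε A (u j s t₁))) := by
  have hE : ∀ t ∈ Icc 0 T, _ := fun t ht => hu.hasDerivAt_entropy (A := A) hn hε ht
  have hD : ∀ j, Continuous fun σ => ∫ s in (0:ℝ)..1, tfeW (u j) s σ ^ 2 := fun j =>
    continuous_integral_tfeW_sq ((hu.smooth j).of_le (by norm_num)) 0 1
  refine ⟨fun t ht => ?_, fun t₁ ht₁ t₂ ht₂ h12 => ?_⟩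
  · have hFTC := integral_eq_sub_of_hasDerivAt
      (fun σ hσ => hE σ (uIcc_subset_Icc ⟨le_rfl, ht.1.trans ht.2⟩ ht hσ))
      ((continuous_finsetSum _ fun j _ => hD j).neg.intervalIntegrable 0 t)
    rw [intervalIntegral.integral_neg,
      intervalIntegral.integral_finsetSum fun j _ => (hD j).intervalIntegrable 0 t] at hFTC
    linarith
  · refine antitoneOn_of_hasDerivWithinAt_nonpos (convex_Icc 0 T)
      (fun t ht => (hE t ht).continuousAt.continuousWithinAt)
      (fun t ht => (hE t (interior_subset ht)).hasDerivWithinAt) (fun t _ => ?_) ht₁ ht₂ h12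
    exact neg_nonpos.2 (Finset.sum_nonneg fun j _ =>
      integral_nonneg zero_le_one fun s _ => sq_nonneg _)

/-- the entropy identity and entropy dissipation for classical solutions of the
regularized thin-film system on a graph. -/
theorem entropy_identity {l m : ℕ} (hl : 1 ≤ l) (hm : 1 ≤ m)
    (n ε T : ℝ) (hn : 1 ≤ n) (hε : 0 < ε) (hT : 0 < T)
    (tl hd : Fin l → Fin m) (bdry : Set (Fin m)) (u : Fin l → ℝ → ℝ → ℝ)
    (hu : IsGraphTFESolution n ε T tl hd bdry u)
    (A : ℝ) (hA : 0 < A) :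
    (∀ t ∈ Icc (0:ℝ) T,
      ∑ j : Fin l, (∫ s in (0:ℝ)..1, tfeG n ε A (u j s t))
        + ∑ j : Fin l, (∫ σ in (0:ℝ)..t, ∫ s in (0:ℝ)..1, (tfeW (u j) s σ) ^ 2)
      = ∑ j : Fin l, (∫ s in (0:ℝ)..1, tfeG n ε A (u j s 0))) ∧
    (∀ t₁ ∈ Icc (0:ℝ) T, ∀ t₂ ∈ Icc (0:ℝ) T, t₁ ≤ t₂ →
      ∑ j : Fin l, (∫ s in (0:ℝ)..1, tfeG n ε A (u j s t₂))
        ≤ ∑ j : Fin l, (∫ s in (0:ℝ)..1, tfeG n ε A (u j s t₁))) :=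
  entropy_identity_general n ε T hn hε tl hd bdry u hu A
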